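/- Let c, λ, P > 0 and let x_L > 0 be a sequence with L·x_L → ∞. If e^{-cλ(1+x_L)} = λP(1+x_L)·((1+x_L)^{L-1} − 1)/(x_L(L−1)) for all large L, then the right-hand side tends to ∞ while the left-hand side is bounded by 1, a contradiction; hence for any such family of solutions one must have lim sup L·x_L < ∞. -/
import Mathlib


open Filter Topology

lemma quad_pow_bound (n : ℕ) (y : ℝ) (hy : 0 ≤ y) :
    1 + (n : ℝ) * y + (n : ℝ) * ((n : ℝ) - 1) / 2 * y ^ 2 ≤ (1 + y) ^ n := by
  induction n with
  | zero => simp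
  | succ n ih =>
    have h1 : (0:ℝ) ≤ (n : ℝ) := Nat.cast_nonneg n
    calc 1 + ((n+1 : ℕ) : ℝ) * y + ((n+1 : ℕ) : ℝ) * (((n+1 : ℕ) : ℝ) - 1) / 2 * y ^ 2
        ≤ (1 + (n : ℝ) * y + (n : ℝ) * ((n : ℝ) - 1) / 2 * y ^ 2) * (1 + y) := by
          have h2 : (0:ℝ) ≤ (n : ℝ) * ((n : ℝ) - 1) := by
            rcases Nat.eq_zero_or_pos n with h | h
            · simp [h]
            · have : (1:ℝ) ≤ (n : ℝ) := by exact_mod_cast h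
              nlinarith
          push_cast
          nlinarith [mul_nonneg h2 (mul_nonneg hy (mul_nonneg hy hy))]
      _ ≤ (1 + y) ^ n * (1 + y) := by
          apply mul_le_mul_of_nonneg_right ih (by linarith)
      _ = (1 + y) ^ (n + 1) := (pow_succ _ _).symm

theorem stmt_3 (c lam P : ℝ) (hc : 0 < c) (hlam : 0 < lam) (hP : 0 < P)
    (x : ℕ → ℝ) (hx : ∀ L, 0 < x L)
    (hxinf : Tendsto (fun L : ℕ => (L : ℝ) * x L) atTop atTop)
    (heq : ∃ N, ∀ L ≥ N,
      Real.exp (-(c * lam * (1 + x L)))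
        = lam * P * (1 + x L) * ((1 + x L) ^ (L - 1) - 1) / (x L * ((L : ℝ) - 1))) :
    False := by
  obtain ⟨N, hN⟩ := heq
  have hev : ∀ᶠ L : ℕ in atTop, 6 / (lam * P) ≤ (L : ℝ) * x L :=
    hxinf.eventually_ge_atTop _
  obtain ⟨L, hL3, hLN, hLx⟩ :
      ∃ L : ℕ, 3 ≤ L ∧ N ≤ L ∧ 6 / (lam * P) ≤ (L : ℝ) * x L := by
    rcases ((eventually_ge_atTop 3).and ((eventually_ge_atTop N).and hev)).exists
      with ⟨L, h1, h2, h3⟩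
    exact ⟨L, h1, h2, h3⟩
  set y := x L with hy
  have hy0 : 0 < y := hx L
  have hm : (3 : ℝ) ≤ (L : ℝ) := by exact_mod_cast hL3
  set m : ℝ := (L : ℝ) with hmdef
  have hcast : ((L - 1 : ℕ) : ℝ) = m - 1 := by
    rw [Nat.cast_sub (by omega)]; simp [hmdef]
  have hpow : 1 + (m - 1) * y + (m - 1) * ((m - 1) - 1) / 2 * y ^ 2 ≤ (1 + y) ^ (L - 1) := by
    have := quad_pow_bound (L - 1) y hy0.le
    rwa [hcast] at this
  have hlamP : 0 < lam * P := mul_pos hlam hP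
  have hmy : 6 ≤ lam * P * (m * y) := by
    rw [div_le_iff₀ hlamP] at hLx
    nlinarith
  -- RHS > 1
  have hden : 0 < y * (m - 1) := mul_pos hy0 (by linarith)
  have hlt : 1 < lam * P * (1 + y) * ((1 + y) ^ (L - 1) - 1) / (y * (m - 1)) := by
    rw [lt_div_iff₀ hden]
    have key : y * (m - 1) <
        lam * P * (1 + y) * ((1 + (m - 1) * y + (m - 1) * ((m - 1) - 1) / 2 * y ^ 2) - 1) := by
      have h1 : 2 ≤ lam * P * ((m - 2) * y) := by nlinarith
      have hA : 0 < lam * P * ((m - 1) * y) :=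
        mul_pos hlamP (mul_pos (by linarith) hy0)
      have h2 : 2 * ((m - 1) * y) ≤ lam * P * ((m - 2) * y) * ((m - 1) * y) := by
        have h3 : (0:ℝ) ≤ (m - 1) * y := by nlinarith
        nlinarith
      have t1 : (0:ℝ) ≤ lam * P * y * ((m - 1) * y) := by
        apply mul_nonneg (mul_nonneg hlamP.le hy0.le); nlinarith
      have t2 : (0:ℝ) ≤ lam * P * y * ((m - 1) * ((m - 2) / 2) * y ^ 2) := by
        apply mul_nonneg (mul_nonneg hlamP.le hy0.le)
        apply mul_nonneg (mul_nonneg (by linarith) (by linarith)) (sq_nonneg y)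
      nlinarith [hA, h2, t1, t2]
    have hmono : lam * P * (1 + y) * ((1 + (m - 1) * y + (m - 1) * ((m - 1) - 1) / 2 * y ^ 2) - 1)
        ≤ lam * P * (1 + y) * ((1 + y) ^ (L - 1) - 1) := by
      apply mul_le_mul_of_nonneg_left (by linarith)
      positivity
    linarith
  have heqL := hN L hLN
  have hexp : Real.exp (-(c * lam * (1 + y))) < 1 := by
    rw [Real.exp_lt_one_iff]
    have := mul_pos (mul_pos hc hlam) (show (0:ℝ) < 1 + y by linarith)
    linarith
  rw [heqL] at hexp
  exact absurd hexp (not_lt.mpr hlt.le)
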